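/- Let t ≥ 1 and k ≥ t+2 be integers. There exists n_0 = n_0(k,t) such that for every n ≥ n_0 and every t-element set X ⊆ [n], the complete sunflower S_X = {A ∈ binom([n],k) : X ⊆ A} satisfies |I(S_X)| < |I(A_t)|, where A_t = {A ∈ binom([n],k) : |A ∩ {1,…,t+2}| ≥ t+1}. -/

import Mathlib

/-!
Every intersection of two distinct members of `S_X` is a set `W` with `X ⊆ W ⊆ [n]` and
`|W| ≤ k - 1`. Conversely, for large `n` every `Z ⊆ [n]` with `|Z| ≤ k - 1` and
`|Z ∩ [t+2]| ≥ t` is an intersection in `A_t`: extend `Z` by two disjoint blocks of fresh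
elements, each block taking one of the points of `[t+2] \ Z` if `Z` meets `[t+2]` in only
`t` points. In particular `I(A_t)` contains every such superset of `[t]`, which are as many as
the supersets of `X`, and also `{2, …, t+1}`, which does not contain `[t]`.
-/

open Finset

/-- The collection of distinct intersections `{F ∩ G : F, G ∈ 𝓕, F ≠ G}`. -/
def interFam (F : Finset (Finset ℕ)) : Finset (Finset ℕ) :=
  ((F ×ˢ F).filter fun p => p.1 ≠ p.2).image fun p => p.1 ∩ p.2

/-- A family is `t`-intersecting if any two members meet in at least `t` elements. -/
def tIntersecting (t : ℕ) (F : Finset (Finset ℕ)) : Prop :=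
  ∀ A ∈ F, ∀ B ∈ F, t ≤ (A ∩ B).card

/-- The family `𝓐_t = {A ∈ [n]^(k) : |A ∩ {1,…,t+2}| ≥ t+1}`. -/
def At (n k t : ℕ) : Finset (Finset ℕ) :=
  ((Finset.Icc 1 n).powersetCard k).filter fun A => t + 1 ≤ (A ∩ Finset.Icc 1 (t + 2)).card

/-- A `t`-intersecting family `F ⊆ [n]^(k)` is saturated if no `k`-set outside `F`
can be added keeping the `t`-intersecting property. -/
def saturated (n k t : ℕ) (F : Finset (Finset ℕ)) : Prop :=
  ∀ G ∈ (Finset.Icc 1 n).powersetCard k, G ∉ F → ¬ tIntersecting t (insert G F)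

/-- The family of `t`-transversals `T(F)`. -/
def transv (n k t : ℕ) (F : Finset (Finset ℕ)) : Finset (Finset ℕ) :=
  (Finset.Icc 1 n).powerset.filter fun T => T.card ≤ k ∧ ∀ A ∈ F, t ≤ (T ∩ A).card

/-- The minimal members (under inclusion) of a family. -/
def minFam (S : Finset (Finset ℕ)) : Finset (Finset ℕ) :=
  S.filter fun B => ∀ B' ∈ S, B' ⊆ B → B' = B

section Counting

variable {α : Type*} [DecidableEq α]

def smallSupersets (U X : Finset α) (m : ℕ) : Finset (Finset α) :=
  U.powerset.filter fun W => X ⊆ W ∧ #W ≤ m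

lemma card_powerset_filter_card_le (A : Finset α) (m : ℕ) :
    #(A.powerset.filter (#· ≤ m)) = ∑ i ∈ range (m + 1), (#A).choose i := by
  have : A.powerset.filter (#· ≤ m) = (range (m + 1)).biUnion (powersetCard · A) := by
    ext V
    simp [mem_powersetCard, and_comm]
  rw [this, card_biUnion fun i _ j _ hij => A.pairwise_disjoint_powersetCard hij]
  simp [card_powersetCard]

lemma card_smallSupersets {U X : Finset α} {m : ℕ} (hXU : X ⊆ U) (hXm : #X ≤ m) :
    #(smallSupersets U X m) = ∑ i ∈ range (m - #X + 1), (#U - #X).choose i := by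
  rw [← card_sdiff_of_subset hXU, ← card_powerset_filter_card_le]
  refine card_nbij' (· \ X) (· ∪ X) ?_ ?_ ?_ ?_
  · intro W hW
    simp only [smallSupersets, coe_filter, Set.mem_ofPred_eq, mem_powerset] at hW ⊢
    refine ⟨sdiff_subset_sdiff hW.1 le_rfl, ?_⟩
    rw [card_sdiff_of_subset hW.2.1]
    omega
  · intro V hV
    simp only [smallSupersets, coe_filter, Set.mem_ofPred_eq, mem_powerset] at hV ⊢
    refine ⟨union_subset (hV.1.trans sdiff_subset) hXU, subset_union_right, ?_⟩
    have := card_union_le V X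
    omega
  · intro W hW
    exact sdiff_union_of_subset (mem_filter.1 hW).2.1
  · intro V hV
    have hVX : Disjoint V X := disjoint_of_subset_left (mem_powerset.1 (mem_filter.1 hV).1)
      sdiff_disjoint
    simp only [union_sdiff_right, hVX.sdiff_eq_left]

lemma exists_disjoint_subsets_card_eq {R : Finset α} {m : ℕ} (h : 2 * m ≤ #R) :
    ∃ D ⊆ R, ∃ D' ⊆ R, Disjoint D D' ∧ #D = m ∧ #D' = m := by
  obtain ⟨D, hDR, hDc⟩ := exists_subset_card_eq (show m ≤ #R by omega)
  obtain ⟨D', hD'R, hD'c⟩ := exists_subset_card_eq (s := R \ D) (n := m) (by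
    rw [card_sdiff_of_subset hDR]
    omega)
  exact ⟨D, hDR, D', hD'R.trans sdiff_subset, disjoint_of_subset_right hD'R disjoint_sdiff,
    hDc, hD'c⟩

end Counting

lemma mem_interFam {F : Finset (Finset ℕ)} {Z : Finset ℕ} :
    Z ∈ interFam F ↔ ∃ A ∈ F, ∃ B ∈ F, A ≠ B ∧ A ∩ B = Z := by
  simp [interFam, and_assoc]

lemma union_mem_interFam {F : Finset (Finset ℕ)} {Z D D' : Finset ℕ}
    (hD : Z ∪ D ∈ F) (hD' : Z ∪ D' ∈ F) (hZD : Disjoint Z D) (hDD' : Disjoint D D')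
    (hDne : D.Nonempty) : Z ∈ interFam F := by
  refine mem_interFam.2 ⟨Z ∪ D, hD, Z ∪ D', hD', fun h => ?_, ?_⟩
  · obtain ⟨a, ha⟩ := hDne
    have : a ∈ Z ∪ D' := h ▸ mem_union_right Z ha
    rcases mem_union.1 this with haZ | haD'
    · exact disjoint_left.1 hZD haZ ha
    · exact disjoint_left.1 hDD' ha haD'
  · rw [← union_inter_distrib_left, disjoint_iff_inter_eq_empty.1 hDD', union_empty]

lemma card_inter_lt_of_ne {A B : Finset ℕ} {k : ℕ} (hA : #A = k) (hB : #B = k) (hAB : A ≠ B) :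
    #(A ∩ B) < k := by
  by_contra! h
  have hA' : A ∩ B = A := eq_of_subset_of_card_le inter_subset_left (hA ▸ h)
  have hB' : A ∩ B = B := eq_of_subset_of_card_le inter_subset_right (hB ▸ h)
  exact hAB (hA'.symm.trans hB')

lemma interFam_subset_smallSupersets {F : Finset (Finset ℕ)} {U X : Finset ℕ} {k : ℕ}
    (hF : ∀ A ∈ F, A ⊆ U ∧ X ⊆ A ∧ #A = k) : interFam F ⊆ smallSupersets U X (k - 1) := by
  intro W hW
  obtain ⟨A, hA, B, hB, hAB, rfl⟩ := mem_interFam.1 hW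
  obtain ⟨hAU, hXA, hAk⟩ := hF A hA
  obtain ⟨-, hXB, hBk⟩ := hF B hB
  have := card_inter_lt_of_ne hAk hBk hAB
  simp only [smallSupersets, mem_filter, mem_powerset]
  exact ⟨inter_subset_left.trans hAU, subset_inter hXA hXB, by omega⟩

section Realization

variable {n k t : ℕ} {Z : Finset ℕ}

lemma union_mem_At {D : Finset ℕ} (hZ : Z ⊆ Icc 1 n) (hD : D ⊆ Icc 1 n) (hZD : Disjoint Z D)
    (hcard : #Z + #D = k) (hI : t + 1 ≤ #((Z ∪ D) ∩ Icc 1 (t + 2))) : Z ∪ D ∈ At n k t := by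
  simp only [At, mem_filter, mem_powersetCard]
  exact ⟨⟨union_subset hZ hD, by rw [card_union_of_disjoint hZD, hcard]⟩, hI⟩

lemma card_fresh_ge (hZI : t ≤ #(Z ∩ Icc 1 (t + 2))) :
    n - #Z - 2 ≤ #(Icc 1 n \ (Z ∪ Icc 1 (t + 2))) := by
  have hunion : #(Z ∪ Icc 1 (t + 2)) + #(Z ∩ Icc 1 (t + 2)) = #Z + (t + 2) := by
    rw [card_union_add_card_inter, Nat.card_Icc, Nat.add_sub_cancel]
  have := le_card_sdiff (Z ∪ Icc 1 (t + 2)) (Icc 1 n)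
  rw [Nat.card_Icc] at this
  omega

lemma mem_interFam_At_of_lt_card_inter (hn : 2 * k + 2 ≤ n) (hZ : Z ⊆ Icc 1 n) (hZk : #Z < k)
    (hZI : t + 1 ≤ #(Z ∩ Icc 1 (t + 2))) : Z ∈ interFam (At n k t) := by
  set R := Icc 1 n \ (Z ∪ Icc 1 (t + 2))
  have hR : n - #Z - 2 ≤ #R := card_fresh_ge (by omega)
  obtain ⟨D, hDR, D', hD'R, hDD', hDc, hD'c⟩ :=
    exists_disjoint_subsets_card_eq (R := R) (m := k - #Z) (by omega)
  have hmem : ∀ E ⊆ R, #E = k - #Z → Z ∪ E ∈ At n k t := fun E hER hEc =>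
    union_mem_At hZ (hER.trans sdiff_subset)
      (disjoint_of_subset_right hER (disjoint_sdiff.mono_left subset_union_left)) (by omega)
      (hZI.trans (card_le_card (inter_subset_inter subset_union_left le_rfl)))
  exact union_mem_interFam (hmem D hDR hDc) (hmem D' hD'R hD'c)
    (disjoint_of_subset_right hDR (disjoint_sdiff.mono_left subset_union_left)) hDD'
    (card_pos.1 (by omega))

lemma mem_interFam_At_of_card_inter_eq (hn : 2 * k + 2 ≤ n) (hZ : Z ⊆ Icc 1 n) (hZk : #Z < k)
    (hZI : #(Z ∩ Icc 1 (t + 2)) = t) : Z ∈ interFam (At n k t) := by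
  set I := Icc 1 (t + 2)
  set R := Icc 1 n \ (Z ∪ I)
  have hR : n - #Z - 2 ≤ #R := card_fresh_ge hZI.ge
  have hIZ : #(I \ Z) = 2 := by
    have := card_sdiff_add_card_inter I Z
    rw [inter_comm, hZI, Nat.card_Icc] at this
    omega
  obtain ⟨a, b, hab, hIZab⟩ := card_eq_two.1 hIZ
  obtain ⟨haI, haZ⟩ := mem_sdiff.1 (hIZab ▸ mem_insert_self a {b})
  obtain ⟨hbI, hbZ⟩ := mem_sdiff.1 (hIZab ▸ mem_insert_of_mem (mem_singleton_self b))
  obtain ⟨D, hDR, D', hD'R, hDD', hDc, hD'c⟩ :=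
    exists_disjoint_subsets_card_eq (R := R) (m := k - #Z - 1) (by omega)
  have hRI : Disjoint R I := sdiff_disjoint.mono_right subset_union_right
  have hZR : Disjoint Z R := (sdiff_disjoint.mono_right subset_union_left).symm
  have htZ : t ≤ #Z := hZI ▸ card_le_card inter_subset_left
  have hIn : I ⊆ Icc 1 n := Icc_subset_Icc le_rfl (by omega)
  have hmem : ∀ x ∈ I, x ∉ Z → ∀ E ⊆ R, #E = k - #Z - 1 → Z ∪ insert x E ∈ At n k t := by
    intro x hxI hxZ E hER hEc
    have hxE : x ∉ E := fun hxE => disjoint_left.1 hRI (hER hxE) hxI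
    have hsub : insert x (Z ∩ I) ⊆ (Z ∪ insert x E) ∩ I :=
      insert_subset (mem_inter.2 ⟨mem_union_right Z (mem_insert_self x E), hxI⟩)
        (inter_subset_inter subset_union_left le_rfl)
    have := card_le_card hsub
    rw [card_insert_of_notMem fun h => hxZ (mem_inter.1 h).1, hZI] at this
    refine union_mem_At hZ (insert_subset (hIn hxI) (hER.trans sdiff_subset))
      (disjoint_insert_right.2 ⟨hxZ, disjoint_of_subset_right hER hZR⟩) ?_ this
    rw [card_insert_of_notMem hxE]
    omega
  have hdisj : Disjoint (insert a D) (insert b D') := by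
    refine disjoint_insert_left.2 ⟨?_, disjoint_insert_right.2 ⟨?_, hDD'⟩⟩
    · exact fun h => (mem_insert.1 h).elim hab fun h => disjoint_left.1 hRI (hD'R h) haI
    · exact fun h => disjoint_left.1 hRI (hDR h) hbI
  exact union_mem_interFam (hmem a haI haZ D hDR hDc) (hmem b hbI hbZ D' hD'R hD'c)
    (disjoint_insert_right.2 ⟨haZ, disjoint_of_subset_right hDR hZR⟩) hdisj
    (insert_nonempty a D)

lemma mem_interFam_At (hn : 2 * k + 2 ≤ n) (hZ : Z ⊆ Icc 1 n) (hZk : #Z < k)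
    (hZI : t ≤ #(Z ∩ Icc 1 (t + 2))) : Z ∈ interFam (At n k t) := by
  rcases hZI.eq_or_lt with h | h
  · exact mem_interFam_At_of_card_inter_eq hn hZ hZk h.symm
  · exact mem_interFam_At_of_lt_card_inter hn hZ hZk h

lemma smallSupersets_subset_interFam_At (hn : 2 * k + 2 ≤ n) (hk : 0 < k) :
    smallSupersets (Icc 1 n) (Icc 1 t) (k - 1) ⊆ interFam (At n k t) := by
  intro Z hZ
  simp only [smallSupersets, mem_filter, mem_powerset] at hZ
  refine mem_interFam_At hn hZ.1 (by omega) ?_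
  calc t = #(Icc 1 t) := by simp
    _ ≤ #(Z ∩ Icc 1 (t + 2)) :=
      card_le_card (subset_inter hZ.2.1 (Icc_subset_Icc le_rfl (by omega)))

end Realization

theorem stmt12 (t k : ℕ) (ht : 1 ≤ t) (hk : t + 2 ≤ k) :
    ∃ n₀ : ℕ, ∀ n : ℕ, n₀ ≤ n →
      ∀ X : Finset ℕ, X ⊆ Finset.Icc 1 n → X.card = t →
        (interFam (((Finset.Icc 1 n).powersetCard k).filter (fun A => X ⊆ A))).card
          < (interFam (At n k t)).card := by
  refine ⟨2 * k + 2, fun n hn X hX hXc => ?_⟩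
  have hT : Icc 1 t ⊆ Icc 1 n := Icc_subset_Icc le_rfl (by omega)
  have hTcard : #(Icc 1 t) = t := by simp
  have hsub := smallSupersets_subset_interFam_At (t := t) hn (by omega)
  have hextra_mem : Icc 2 (t + 1) ∈ interFam (At n k t) :=
    mem_interFam_At hn (Icc_subset_Icc (by omega) (by omega)) (by simp; omega)
      (by rw [inter_eq_left.2 (Icc_subset_Icc (by omega) (by omega))]; simp)
  have hextra_notMem : Icc 2 (t + 1) ∉ smallSupersets (Icc 1 n) (Icc 1 t) (k - 1) := fun h =>
    by simpa using (mem_filter.1 h).2.1 (left_mem_Icc.2 ht)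
  calc #(interFam _)
      ≤ #(smallSupersets (Icc 1 n) X (k - 1)) := card_le_card <|
        interFam_subset_smallSupersets fun A hA => by
          simp only [mem_filter, mem_powersetCard] at hA
          exact ⟨hA.1.1, hA.2, hA.1.2⟩
    _ = #(smallSupersets (Icc 1 n) (Icc 1 t) (k - 1)) := by
        rw [card_smallSupersets hX (by omega), card_smallSupersets hT (by omega), hXc, hTcard]
    _ < #(interFam (At n k t)) :=
        card_lt_card ((ssubset_iff_of_subset hsub).2 ⟨_, hextra_mem, hextra_notMem⟩)
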